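/- arXiv:1812.08285 — 3 statements merged into one kernel-verified Lean document; each statement's English description precedes it below -/
import Mathlib

section
/- Let x ∈ (−1,1), U, V, W ∈ ℝ, and p, q ∈ ℝ with p ≠ 0. Define λ₁₁ = e^{2U+V}(1−x)·cosh W, λ₁₂ = (e^{2U}/p)·( √(1−x²)·sinh W − q·e^{V}(1−x)·cosh W ), and λ₂₂ = (e^{2U}/p²)·( q²e^{V}(1−x)·cosh W − 2q·√(1−x²)·sinh W + e^{−V}(1+x)·cosh W ). Then: (i) λ₁₁·λ₂₂ − λ₁₂² = e^{4U}(1−x²)/p²; (ii) q²·λ₁₁ + 2pq·λ₁₂ + p²·λ₂₂ = e^{2U−V}(1+x)·cosh W; and (iii) (1−x²)² / ( (λ₁₁λ₂₂ − λ₁₂²)·λ₁₁ ) = p²(1+x) / ( e^{6U+V}·cosh W ). -/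
/-!
The substitution `λ = e^{2U} · Sᵀ μ S` with the shear `S = [[1, -q/p], [0, 1/p]]` reduces
everything to the matrix
`μ = [[e^V (1-x) cosh W, √(1-x²) sinh W], [√(1-x²) sinh W, e^{-V} (1+x) cosh W]]`.
Since `S` sends the rod vector `(q, p)` to `(0, 1)` and `det S = 1/p`, (i) and (ii) follow from
`det μ = 1 - x²` (a consequence of `cosh² - sinh² = 1`) and from reading off `μ₂₂`;
(iii) follows by substituting (i) and `λ₁₁`.
-/

open Real

section Shear

variable {A p q l₁₁ l₁₂ l₂₂ m₁₁ m₁₂ m₂₂ : ℝ}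

theorem det_eq_of_shear (hp : p ≠ 0) (h₁₁ : l₁₁ = A * m₁₁)
    (h₁₂ : l₁₂ = A / p * (m₁₂ - q * m₁₁))
    (h₂₂ : l₂₂ = A / p ^ 2 * (q ^ 2 * m₁₁ - 2 * q * m₁₂ + m₂₂)) :
    l₁₁ * l₂₂ - l₁₂ ^ 2 = A ^ 2 * (m₁₁ * m₂₂ - m₁₂ ^ 2) / p ^ 2 := by
  subst h₁₁ h₁₂ h₂₂
  field_simp
  ring

theorem rod_contraction_eq_of_shear (hp : p ≠ 0) (h₁₁ : l₁₁ = A * m₁₁)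
    (h₁₂ : l₁₂ = A / p * (m₁₂ - q * m₁₁))
    (h₂₂ : l₂₂ = A / p ^ 2 * (q ^ 2 * m₁₁ - 2 * q * m₁₂ + m₂₂)) :
    q ^ 2 * l₁₁ + 2 * p * q * l₁₂ + p ^ 2 * l₂₂ = A * m₂₂ := by
  subst h₁₁ h₁₂ h₂₂
  field_simp
  ring

end Shear

theorem cosh_sinh_det_eq_one_sub_sq {x : ℝ} (hx : x ∈ Set.Icc (-1 : ℝ) 1)
    (V W : ℝ) :
    exp V * (1 - x) * cosh W * (exp (-V) * (1 + x) * cosh W)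
      - (√(1 - x ^ 2) * sinh W) ^ 2 = 1 - x ^ 2 := by
  have hsqrt : √(1 - x ^ 2) ^ 2 = 1 - x ^ 2 := sq_sqrt (by nlinarith [hx.1, hx.2])
  have hexp : exp V * exp (-V) = 1 := by rw [← exp_add, add_neg_cancel, exp_zero]
  linear_combination (1 - x ^ 2) * cosh W ^ 2 * hexp - sinh W ^ 2 * hsqrt
    + (1 - x ^ 2) * cosh_sq_sub_sinh_sq W

theorem conical_ratio_eq {x p E F c : ℝ} (hx₁ : x ≠ 1) (hx₂ : x ≠ -1) :
    (1 - x ^ 2) ^ 2 / (E * (1 - x ^ 2) / p ^ 2 * (F * (1 - x) * c))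
      = p ^ 2 * (1 + x) / (E * F * c) := by
  have h : (1 - x) ^ 2 * (1 + x) ≠ 0 := by
    have : 1 - x ≠ 0 := sub_ne_zero.mpr hx₁.symm
    have : 1 + x ≠ 0 := fun h ↦ hx₂ (by linarith)
    positivity
  calc (1 - x ^ 2) ^ 2 / (E * (1 - x ^ 2) / p ^ 2 * (F * (1 - x) * c))
      = (1 + x) * ((1 - x) ^ 2 * (1 + x)) / (E * F * c / p ^ 2 * ((1 - x) ^ 2 * (1 + x))) := by
        congr 1 <;> ring
    _ = (1 + x) / (E * F * c / p ^ 2) := mul_div_mul_right _ _ h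
    _ = p ^ 2 * (1 + x) / (E * F * c) := by rw [div_div_eq_mul_div, mul_comm]

/-- Properties of the lens-space parameterization `(U,V,W)` of the Gram matrix `λᵢⱼ`:
the determinant formula, the contraction with the rod vector `(q,p)`, and the
conical-regularity ratio. -/
theorem stmt5 (x U V W p q : ℝ) (hx : x ∈ Set.Ioo (-1 : ℝ) 1) (hp : p ≠ 0)
    (l11 l12 l22 : ℝ)
    (h11 : l11 = Real.exp (2 * U + V) * (1 - x) * Real.cosh W)
    (h12 : l12 = (Real.exp (2 * U) / p) * (Real.sqrt (1 - x ^ 2) * Real.sinh W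
      - q * Real.exp V * (1 - x) * Real.cosh W))
    (h22 : l22 = (Real.exp (2 * U) / p ^ 2) * (q ^ 2 * Real.exp V * (1 - x) * Real.cosh W
      - 2 * q * Real.sqrt (1 - x ^ 2) * Real.sinh W
      + Real.exp (-V) * (1 + x) * Real.cosh W)) :
    l11 * l22 - l12 ^ 2 = Real.exp (4 * U) * (1 - x ^ 2) / p ^ 2
    ∧ q ^ 2 * l11 + 2 * p * q * l12 + p ^ 2 * l22
        = Real.exp (2 * U - V) * (1 + x) * Real.cosh W
    ∧ (1 - x ^ 2) ^ 2 / ((l11 * l22 - l12 ^ 2) * l11)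
        = p ^ 2 * (1 + x) / (Real.exp (6 * U + V) * Real.cosh W) := by
  have h11' : l11 = exp (2 * U) * (exp V * (1 - x) * cosh W) := by rw [h11, exp_add]; ring
  have h12' : l12 = exp (2 * U) / p
      * (√(1 - x ^ 2) * sinh W - q * (exp V * (1 - x) * cosh W)) := by
    rw [h12]; ring
  have h22' : l22 = exp (2 * U) / p ^ 2 * (q ^ 2 * (exp V * (1 - x) * cosh W)
      - 2 * q * (√(1 - x ^ 2) * sinh W) + exp (-V) * (1 + x) * cosh W) := by
    rw [h22]; ring
  have hdet : l11 * l22 - l12 ^ 2 = exp (4 * U) * (1 - x ^ 2) / p ^ 2 := by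
    rw [det_eq_of_shear hp h11' h12' h22',
      cosh_sinh_det_eq_one_sub_sq (Set.Ioo_subset_Icc_self hx), ← exp_nat_mul]
    ring_nf
  refine ⟨hdet, ?_, ?_⟩
  · rw [rod_contraction_eq_of_shear hp h11' h12' h22', sub_eq_add_neg, exp_add]
    ring
  · rw [hdet, h11, conical_ratio_eq hx.2.ne hx.1.ne', ← exp_add]
    ring_nf
end

section
/- For every real number a > 0, one has (e^{2a} − 1 − 2a)·(e^{−2a} − 1 + 2a) > 4a⁴. -/
/-! Put `x = 2a`. Since `e^x e^{-x} = 1`, the product equals `2 + 2x sinh x - 2 cosh x - x²`, whose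
Taylor series is `∑_{k ≥ 2} 2(2k-1) x^{2k}/(2k)! = x⁴/4 + x⁶/72 + ⋯`. The strict bound by `x⁴/4`
follows from two monotonicity arguments: the derivative of the difference is
`2x (cosh x - 1 - x²/2)`, and `cosh x - 1 - x²/2` has derivative `sinh x - x > 0`. -/

open Real

theorem pos_of_hasDerivAt_of_eq_zero {f f' : ℝ → ℝ} (hf : ∀ x, HasDerivAt f (f' x) x)
    (h0 : f 0 = 0) (hf' : ∀ x, 0 < x → 0 < f' x) {x : ℝ} (hx : 0 < x) : 0 < f x := by
  have hmono : StrictMonoOn f (Set.Ici 0) := by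
    refine strictMonoOn_of_deriv_pos (convex_Ici 0)
      (fun y _ ↦ (hf y).continuousAt.continuousWithinAt) fun y hy ↦ ?_
    rw [(hf y).deriv]
    exact hf' y (by simpa using hy)
  simpa [h0] using hmono Set.self_mem_Ici hx.le hx

theorem one_add_sq_div_two_lt_cosh {x : ℝ} (hx : 0 < x) : 1 + x ^ 2 / 2 < cosh x := by
  have hderiv (y : ℝ) : HasDerivAt (fun t ↦ cosh t - 1 - t ^ 2 / 2) (sinh y - y) y := by
    refine ((hasDerivAt_cosh y).sub_const 1).sub ((hasDerivAt_pow 2 y).div_const 2)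
      |>.congr_deriv ?_
    norm_num
  have := pos_of_hasDerivAt_of_eq_zero hderiv (by simp)
    (fun y hy ↦ sub_pos.2 (self_lt_sinh_iff.2 hy)) hx
  linarith

theorem two_mul_cosh_add_sq_add_pow_four_div_four_lt {x : ℝ} (hx : 0 < x) :
    2 * cosh x + x ^ 2 + x ^ 4 / 4 < 2 + 2 * x * sinh x := by
  have hderiv (y : ℝ) : HasDerivAt (fun t ↦ 2 + 2 * t * sinh t - 2 * cosh t - t ^ 2 - t ^ 4 / 4)
      (2 * y * (cosh y - 1 - y ^ 2 / 2)) y := by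
    refine ((((((hasDerivAt_id y).const_mul 2).mul (hasDerivAt_sinh y)).const_add 2).sub
      ((hasDerivAt_cosh y).const_mul 2)).sub (hasDerivAt_pow 2 y)).sub
      ((hasDerivAt_pow 4 y).div_const 4) |>.congr_deriv ?_
    simp only [id]
    ring
  have := pos_of_hasDerivAt_of_eq_zero hderiv (by simp) (fun y hy ↦
    mul_pos (by positivity) (by linarith [one_add_sq_div_two_lt_cosh hy])) hx
  linarith

theorem exp_sub_one_sub_mul_exp_neg_sub_one_add (x : ℝ) :
    (exp x - 1 - x) * (exp (-x) - 1 + x) = 2 + 2 * x * sinh x - 2 * cosh x - x ^ 2 := by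
  rw [sinh_eq, cosh_eq]
  have : exp x * exp (-x) = 1 := by rw [← exp_add, add_neg_cancel, exp_zero]
  linear_combination this

/-- The strict inequality `(e^{2a} - 1 - 2a)(e^{-2a} - 1 + 2a) > 4a⁴` for `a > 0`,
which is the positivity of the completed-square coefficient in the
energy-convexity lemma. -/
theorem stmt7 (a : ℝ) (ha : 0 < a) :
    (Real.exp (2 * a) - 1 - 2 * a) * (Real.exp (-(2 * a)) - 1 + 2 * a) > 4 * a ^ 4 := by
  rw [exp_sub_one_sub_mul_exp_neg_sub_one_add]
  linarith [two_mul_cosh_add_sq_add_pow_four_div_four_lt (by positivity : 0 < 2 * a)]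
end

section
/- Let a > 0 and m > 0. Then there exists δ > 0 such that for all c₁, c₂ ∈ ℝ with |c₁·e^{a} + c₂·e^{−a}| ≥ m, one has (1/2)(e^{2a} − 1 − 2a)·c₁² + 2a²·c₁c₂ + (1/2)(e^{−2a} − 1 + 2a)·c₂² ≥ δ. -/
/-! The form is `A c₁² + 2B c₁c₂ + C c₂²` with `B = a²`, and it is positive definite because
`(e^u - 1 - u)(e^{-u} - 1 + u) = 2u sinh u - 2cosh u + 2 - u²` exceeds `u⁴/4` for `u = 2a > 0`
(its difference with `u⁴/4` has derivative `2u(cosh u - 1 - u²/2) > 0`). Cauchy–Schwarz for the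
inner product given by the form then bounds it below by a positive multiple of
`(c₁e^a + c₂e^{-a})²`. -/

open Set

namespace Real

theorem one_add_sq_div_two_lt_cosh {x : ℝ} (hx : 0 < x) : 1 + x ^ 2 / 2 < cosh x := by
  have hmono : StrictMonoOn (fun t => cosh t - t ^ 2 / 2) (Ici 0) := by
    refine strictMonoOn_of_hasDerivWithinAt_pos (f' := fun t => sinh t - t) (convex_Ici 0)
      (by fun_prop) (fun t _ => ?_) fun t ht => ?_
    · have hd : HasDerivAt (fun t => cosh t - t ^ 2 / 2) (sinh t - ↑2 * t ^ (2 - 1) / 2) t :=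
        (hasDerivAt_cosh t).sub ((hasDerivAt_pow 2 t).div_const 2)
      exact (hd.congr_deriv (by ring)).hasDerivWithinAt
    · rw [interior_Ici, mem_Ioi] at ht
      exact sub_pos.2 (self_lt_sinh_iff.2 ht)
  have := hmono self_mem_Ici hx.le hx
  simp only [cosh_zero] at this
  linarith

theorem pow_four_div_four_lt_mul_sinh_sub_cosh {u : ℝ} (hu : 0 < u) :
    u ^ 4 / 4 < 2 * u * sinh u - 2 * cosh u + 2 - u ^ 2 := by
  have hmono : StrictMonoOn
      (fun t => 2 * t * sinh t - 2 * cosh t + 2 - t ^ 2 - t ^ 4 / 4) (Ici 0) := by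
    refine strictMonoOn_of_hasDerivWithinAt_pos (f' := fun t => 2 * t * (cosh t - 1 - t ^ 2 / 2))
      (convex_Ici 0) (by fun_prop) (fun t _ => ?_) fun t ht => ?_
    · have hd : HasDerivAt (fun t => 2 * t * sinh t - 2 * cosh t + 2 - t ^ 2 - t ^ 4 / 4)
          (2 * 1 * sinh t + 2 * t * cosh t - 2 * sinh t - ↑2 * t ^ (2 - 1)
            - ↑4 * t ^ (4 - 1) / 4) t :=
        (((((hasDerivAt_id t).const_mul 2).mul (hasDerivAt_sinh t)).sub
          ((hasDerivAt_cosh t).const_mul 2)).add_const 2).sub (hasDerivAt_pow 2 t) |>.sub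
          ((hasDerivAt_pow 4 t).div_const 4)
      exact (hd.congr_deriv (by ring)).hasDerivWithinAt
    · rw [interior_Ici, mem_Ioi] at ht
      have := one_add_sq_div_two_lt_cosh ht
      exact mul_pos (by linarith) (by linarith)
  have := hmono self_mem_Ici hu.le hu
  simp only [sinh_zero, cosh_zero] at this
  linarith

theorem pow_four_div_four_lt_exp_sub_mul_exp_neg_sub {u : ℝ} (hu : 0 < u) :
    u ^ 4 / 4 < (exp u - 1 - u) * (exp (-u) - 1 + u) := by
  have hprod : exp u * exp (-u) = 1 := by rw [← exp_add, add_neg_cancel, exp_zero]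
  have hexpand : (exp u - 1 - u) * (exp (-u) - 1 + u)
      = 2 * u * sinh u - 2 * cosh u + 2 - u ^ 2 := by
    rw [sinh_eq, cosh_eq]
    linear_combination hprod
  rw [hexpand]
  exact pow_four_div_four_lt_mul_sinh_sub_cosh hu

end Real

open Real

/-- Cauchy–Schwarz for the form with matrix `M = !![A, B; B, C]`: the coefficient
`C p² - 2B pq + A q²` is `det M · (p, q) M⁻¹ (p, q)ᵀ`. -/
theorem det_mul_sq_le_adjugate_mul_quadratic (A B C p q x y : ℝ) :
    (A * C - B ^ 2) * (p * x + q * y) ^ 2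
      ≤ (C * p ^ 2 - 2 * B * p * q + A * q ^ 2) * (A * x ^ 2 + 2 * B * x * y + C * y ^ 2) := by
  nlinarith [sq_nonneg (p * (B * x + C * y) - q * (A * x + B * y))]

theorem exists_pos_le_quadratic_of_le_abs_linear {A B C p q m : ℝ} (hA : 0 < A)
    (hdet : B ^ 2 < A * C) (hp : p ≠ 0) (hm : 0 < m) :
    ∃ δ > 0, ∀ x y : ℝ, m ≤ |p * x + q * y| → δ ≤ A * x ^ 2 + 2 * B * x * y + C * y ^ 2 := by
  have hD : 0 < C * p ^ 2 - 2 * B * p * q + A * q ^ 2 := by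
    have : 0 < A * (C * p ^ 2 - 2 * B * p * q + A * q ^ 2) := by
      nlinarith [sq_nonneg (A * q - B * p), mul_pos (sub_pos.2 hdet) (sq_pos_of_ne_zero hp)]
    exact pos_of_mul_pos_right this hA.le
  refine ⟨(A * C - B ^ 2) * m ^ 2 / (C * p ^ 2 - 2 * B * p * q + A * q ^ 2),
    by have := sub_pos.2 hdet; positivity, fun x y hxy => ?_⟩
  rw [div_le_iff₀' hD]
  calc (A * C - B ^ 2) * m ^ 2 ≤ (A * C - B ^ 2) * (p * x + q * y) ^ 2 := by
        refine mul_le_mul_of_nonneg_left ?_ (sub_pos.2 hdet).le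
        simpa only [sq_abs] using pow_le_pow_left₀ hm.le hxy 2
    _ ≤ _ := det_mul_sq_le_adjugate_mul_quadratic A B C p q x y

/-- Uniform positive lower bound for the second-variation quadratic form when the
Jacobi field value `g(1) = c₁e^{a} + c₂e^{-a}` is bounded away from zero. -/
theorem stmt11 (a m : ℝ) (ha : 0 < a) (hm : 0 < m) :
    ∃ δ > 0, ∀ c₁ c₂ : ℝ, m ≤ |c₁ * Real.exp a + c₂ * Real.exp (-a)| →
      δ ≤ (1 / 2) * (Real.exp (2 * a) - 1 - 2 * a) * c₁ ^ 2 + 2 * a ^ 2 * c₁ * c₂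
        + (1 / 2) * (Real.exp (-(2 * a)) - 1 + 2 * a) * c₂ ^ 2 := by
  have hA : 0 < (1 / 2) * (exp (2 * a) - 1 - 2 * a) := by
    have := add_one_lt_exp (by positivity : 2 * a ≠ 0)
    linarith
  have hdet : (a ^ 2) ^ 2
      < (1 / 2) * (exp (2 * a) - 1 - 2 * a) * ((1 / 2) * (exp (-(2 * a)) - 1 + 2 * a)) := by
    have := pow_four_div_four_lt_exp_sub_mul_exp_neg_sub (by positivity : 0 < 2 * a)
    linarith
  obtain ⟨δ, hδ, hbound⟩ := exists_pos_le_quadratic_of_le_abs_linear hA hdet (exp_pos a).ne' hm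
  refine ⟨δ, hδ, fun c₁ c₂ hc => hbound c₁ c₂ ?_⟩
  simpa only [mul_comm] using hc
end
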